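/- arXiv:2510.11033 — 6 statements merged into one kernel-verified Lean document; each statement's English description precedes it below -/
import Mathlib

section
/- If F is a family of functions from ω to ω of cardinality less than 𝔡, and 𝒜 is a family of cardinality less than 𝔡 such that each A ∈ 𝒜 is an infinite family of mutually disjoint non-empty finite subsets of ω, then there exists h : ω → ω such that for every A ∈ 𝒜 and every f ∈ F there exists a ∈ A with f(n) < h(n) for all n ∈ a. -/
/-- The dominating number 𝔡: the least cardinality of a family `D ⊆ ω^ω` such that
every `x : ℕ → ℕ` is everywhere dominated by some member of `D`. -/
noncomputable def dominatingNumber : Cardinal :=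
  sInf {c : Cardinal | ∃ D : Set (ℕ → ℕ), Cardinal.mk D = c ∧
    ∀ x : ℕ → ℕ, ∃ d ∈ D, ∀ n, x n ≤ d n}

lemma aleph0_le_dominatingNumber : Cardinal.aleph0 ≤ dominatingNumber := by
  apply le_csInf
  · exact ⟨Cardinal.mk (Set.univ : Set (ℕ → ℕ)), Set.univ, rfl,
      fun x => ⟨x, trivial, fun n => le_rfl⟩⟩
  · rintro c ⟨D, rfl, hdom⟩
    by_contra hlt
    push_neg at hlt
    have hDfin : D.Finite := Cardinal.lt_aleph0_iff_set_finite.mp hlt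
    obtain ⟨d, hd, hdd⟩ := hdom (fun n => sSup ((fun d : ℕ → ℕ => d n) '' D) + 1)
    have h1 : d 0 ≤ sSup ((fun d : ℕ → ℕ => d 0) '' D) :=
      le_csSup ((hDfin.image _).bddAbove) ⟨d, hd, rfl⟩
    have h2 : sSup ((fun d : ℕ → ℕ => d 0) '' D) + 1 ≤ d 0 := hdd 0
    exact Nat.not_succ_le_self _ (h2.trans h1)

lemma not_dominating_of_small (G : Set (ℕ → ℕ)) (hG : Cardinal.mk G < dominatingNumber) :
    ∃ x : ℕ → ℕ, ∀ y ∈ G, ∃ m, y m < x m := by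
  by_contra hcon
  push_neg at hcon
  have : dominatingNumber ≤ Cardinal.mk G := by
    apply csInf_le (OrderBot.bddBelow _)
    refine ⟨G, rfl, fun x => ?_⟩
    obtain ⟨d, hd, hdom⟩ := hcon x
    exact ⟨d, hd, hdom⟩
  exact absurd hG (not_lt.mpr this)

theorem stmt0 (F : Set (ℕ → ℕ)) (hF : Cardinal.mk F < dominatingNumber)
    (𝒜 : Set (Set (Set ℕ))) (h𝒜 : Cardinal.mk 𝒜 < dominatingNumber)
    (hA : ∀ A ∈ 𝒜, A.Infinite ∧ (∀ a ∈ A, a.Finite ∧ a.Nonempty) ∧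
      A.Pairwise (fun a b => Disjoint a b)) :
    ∃ h : ℕ → ℕ, ∀ A ∈ 𝒜, ∀ f ∈ F, ∃ a ∈ A, ∀ n ∈ a, f n < h n := by
  classical
  -- For each A ∈ 𝒜 and each m, there is a block all of whose elements are ≥ m.
  have hblock : ∀ A ∈ 𝒜, ∀ m : ℕ, ∃ a ∈ A, ∀ n ∈ a, m ≤ n := by
    intro A hAmem m
    by_contra hcon
    push_neg at hcon
    obtain ⟨hinf, hfin, hdisj⟩ := hA A hAmem
    choose! pt hpt hptlt using hcon
    apply hinf
    apply Set.Finite.of_finite_image (f := pt)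
    · exact (Set.finite_Iio m).subset (by rintro _ ⟨a, ha, rfl⟩; exact hptlt a ha)
    · intro a ha b hb hab
      by_contra hne
      exact Set.disjoint_left.mp (hdisj ha hb hne) (hpt a ha) (hab ▸ hpt b hb)
  choose! c hcmem hcge using hblock
  set g : Set (Set ℕ) → (ℕ → ℕ) → ℕ → ℕ := fun A f m => sSup (f '' c A m) with hgdef
  set G : Set (ℕ → ℕ) := {x | ∃ A ∈ 𝒜, ∃ f ∈ F, x = g A f} with hGdef
  have hGcard : Cardinal.mk G < dominatingNumber := by
    have hsurj : Function.Surjective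
        (fun p : ↥𝒜 × ↥F => (⟨g p.1 p.2, p.1, p.1.2, p.2, p.2.2, rfl⟩ : G)) := by
      rintro ⟨y, A, hA', f, hf', rfl⟩
      exact ⟨(⟨A, hA'⟩, ⟨f, hf'⟩), rfl⟩
    calc Cardinal.mk G ≤ Cardinal.mk (↥𝒜 × ↥F) := Cardinal.mk_le_of_surjective hsurj
      _ = Cardinal.mk ↥𝒜 * Cardinal.mk ↥F := by
          simp [Cardinal.mk_prod]
      _ < dominatingNumber := Cardinal.mul_lt_of_lt aleph0_le_dominatingNumber h𝒜 hF
  obtain ⟨x, hx⟩ := not_dominating_of_small G hGcard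
  refine ⟨fun n => Finset.sup (Finset.range (n + 1)) x, ?_⟩
  intro A hAmem f hf
  obtain ⟨m, hm⟩ := hx (g A f) ⟨A, hAmem, f, hf, rfl⟩
  refine ⟨c A m, hcmem A hAmem m, ?_⟩
  intro n hn
  have hfin : (c A m).Finite := ((hA A hAmem).2.1 _ (hcmem A hAmem m)).1
  have h1 : f n ≤ g A f m := le_csSup ((hfin.image f).bddAbove) ⟨n, hn, rfl⟩
  have h2 : m ≤ n := hcge A hAmem m n hn
  have h3 : x m ≤ Finset.sup (Finset.range (n + 1)) x :=
    Finset.le_sup (Finset.mem_range.mpr (by omega))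
  exact lt_of_le_of_lt h1 (lt_of_lt_of_le hm h3)
end

section
/- A topological space X is S-separable if and only if X is pM-separable. -/
/-- `X` is S-separable. -/
def SSep (X : Type*) [TopologicalSpace X] : Prop :=
  ∀ D : ℕ → Set X, (∀ n, Dense (D n)) →
    ∃ F : ℕ → Finset X, (∀ n, ↑(F n) ⊆ D n) ∧
      ∀ (k : ℕ) (U : Fin k → Set X), (∀ i, IsOpen (U i)) → (∀ i, (U i).Nonempty) →
        ∃ n, ∀ i, (U i ∩ ↑(F n)).Nonempty

/-- `X` is M-separable. -/
def MSep (X : Type*) [TopologicalSpace X] : Prop :=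
  ∀ D : ℕ → Set X, (∀ n, Dense (D n)) →
    ∃ F : ℕ → Finset X, (∀ n, ↑(F n) ⊆ D n) ∧ Dense (⋃ n, (F n : Set X))

/-- `X` is H-separable. -/
def HSep (X : Type*) [TopologicalSpace X] : Prop :=
  ∀ D : ℕ → Set X, (∀ n, Dense (D n)) →
    ∃ F : ℕ → Finset X, (∀ n, ↑(F n) ⊆ D n) ∧
      ∀ U : Set X, IsOpen U → U.Nonempty →
        ∀ᶠ n in Filter.atTop, (U ∩ ↑(F n)).Nonempty

/-- `X` is pM-separable. -/
def pMSep (X : Type*) [TopologicalSpace X] : Prop :=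
  ∀ D : ℕ → Set X, (∀ k, Dense (D k)) → ∀ n : ℕ,
    ∃ F : ℕ → Finset X,
      Dense (⋃ k, {g : Fin n → X | ∀ i, g i ∈ (F k : Set X) ∩ D k})

theorem stmt1 (X : Type*) [TopologicalSpace X] : SSep X ↔ pMSep X := by
  classical
  constructor
  · intro hS D hD n
    obtain ⟨F, hFsub, hFhit⟩ := hS D hD
    refine ⟨F, ?_⟩
    rw [dense_iff_inter_open]
    rintro U hU ⟨f, hf⟩
    obtain ⟨I, u, hu, hsub⟩ := isOpen_pi_iff.mp hU f hf
    set V : Fin n → Set X := fun i => if i ∈ I then u i else Set.univ with hV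
    have hVopen : ∀ i, IsOpen (V i) := by
      intro i
      by_cases h : i ∈ I
      · simpa [hV, h] using (hu i h).1
      · simp [hV, h]
    have hVne : ∀ i, (V i).Nonempty := by
      intro i
      refine ⟨f i, ?_⟩
      by_cases h : i ∈ I
      · simpa [hV, h] using (hu i h).2
      · simp [hV, h]
    obtain ⟨m, hm⟩ := hFhit n V hVopen hVne
    choose g hg using hm
    have hgpi : g ∈ Set.pi (↑I) u := by
      intro i hi
      have hi' : i ∈ I := hi
      have := (hg i).1
      simpa [hV, hi'] using this
    refine ⟨g, hsub hgpi, ?_⟩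
    rw [Set.mem_iUnion]
    exact ⟨m, fun i => ⟨(hg i).2, hFsub m (hg i).2⟩⟩
  · intro hP D hD
    have key : ∀ n : ℕ, ∃ F : ℕ → Finset X,
        Dense (⋃ k, {g : Fin n → X | ∀ i, g i ∈ (F k : Set X) ∩ D (k + n)}) :=
      fun n => hP (fun k => D (k + n)) (fun k => hD _) n
    choose F hF using key
    refine ⟨fun m => (Finset.range (m + 1)).biUnion
      (fun n => (F n (m - n)).filter (fun x => x ∈ D m)), ?_, ?_⟩
    · intro m x hx
      rw [Finset.coe_biUnion] at hx
      simp only [Set.mem_iUnion, Finset.coe_filter, Set.mem_setOf_eq] at hx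
      obtain ⟨n, _, _, h2⟩ := hx
      exact h2
    · intro k U hUo hUne
      have hbox : IsOpen (Set.pi Set.univ U) :=
        isOpen_set_pi Set.finite_univ (fun i _ => hUo i)
      have hboxne : (Set.pi Set.univ U).Nonempty :=
        ⟨fun i => (hUne i).choose, fun i _ => (hUne i).choose_spec⟩
      obtain ⟨g, hg1, hg2⟩ := (hF k).inter_open_nonempty _ hbox hboxne
      rw [Set.mem_iUnion] at hg2
      obtain ⟨j, hj⟩ := hg2
      refine ⟨j + k, fun i => ⟨g i, hg1 i (Set.mem_univ i), ?_⟩⟩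
      rw [Finset.mem_coe, Finset.mem_biUnion]
      refine ⟨k, Finset.mem_range.mpr (by omega), Finset.mem_filter.mpr ⟨?_, (hj i).2⟩⟩
      have : j + k - k = j := by omega
      rw [this]
      exact (hj i).1
end

section
/- If every finite power Xⁿ of a topological space X is M-separable, then X is S-separable. -/
theorem stmt2 (X : Type*) [TopologicalSpace X]
    (h : ∀ n : ℕ, MSep (Fin n → X)) : SSep X := by
  intro D hD
  -- for each power k, apply MSep to the dense sets (D (k+m))^k
  have key : ∀ k : ℕ, ∃ G : ℕ → Finset (Fin k → X),
      (∀ m, ↑(G m) ⊆ Set.pi Set.univ (fun _ : Fin k => D (k + m))) ∧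
      Dense (⋃ m, (G m : Set (Fin k → X))) := by
    intro k
    exact h k (fun m => Set.pi Set.univ (fun _ : Fin k => D (k + m)))
      (fun m => dense_pi Set.univ (fun i _ => hD (k + m)))
  choose G hG1 hG2 using key
  classical
  refine ⟨fun n => (Finset.range (n + 1)).biUnion
    (fun k => (G k (n - k)).biUnion (fun f => Finset.image f Finset.univ)), ?_, ?_⟩
  · intro n x hx
    simp only [Finset.coe_biUnion, Finset.mem_coe, Finset.mem_range, Set.mem_iUnion,
      Finset.mem_biUnion, Finset.mem_image, Finset.mem_univ, true_and] at hx
    obtain ⟨k, hk, f, hf, i, rfl⟩ := hx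
    have h2 : f ∈ Set.pi Set.univ (fun _ : Fin k => D (k + (n - k))) := hG1 k (n - k) hf
    have : f i ∈ D (k + (n - k)) := h2 i (Set.mem_univ i)
    rwa [Nat.add_sub_cancel' (Nat.lt_succ_iff.mp hk)] at this
  · intro k U hU hUne
    have hV : IsOpen (Set.pi Set.univ U) := isOpen_set_pi Set.finite_univ (fun i _ => hU i)
    have hVne : (Set.pi Set.univ U).Nonempty :=
      ⟨fun i => (hUne i).choose, fun i _ => (hUne i).choose_spec⟩
    obtain ⟨p, hpV, hpG⟩ := (hG2 k).inter_open_nonempty _ hV hVne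
    simp only [Set.mem_iUnion, Finset.mem_coe] at hpG
    obtain ⟨m, hm⟩ := hpG
    refine ⟨k + m, fun i => ⟨p i, hpV i (Set.mem_univ i), ?_⟩⟩
    simp only [Finset.coe_biUnion, Finset.mem_coe, Finset.mem_range, Set.mem_iUnion,
      Finset.mem_biUnion, Finset.mem_image, Finset.mem_univ, true_and]
    exact ⟨k, by omega, p, by simpa using hm, i, rfl⟩
end

section
/- If X is an S-separable topological space and U ⊆ X is a nonempty open subset, then the subspace U is S-separable. -/
theorem stmt9 (X : Type*) [TopologicalSpace X] (h : SSep X)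
    (U : Set X) (hU : IsOpen U) (hne : U.Nonempty) : SSep U := by
  intro D hD
  classical
  -- extend each dense set of U to a dense set of X
  set D' : ℕ → Set X := fun n => (Subtype.val '' D n) ∪ Uᶜ with hD'
  have hD'dense : ∀ n, Dense (D' n) := by
    intro n
    rw [dense_iff_inter_open]
    intro O hO hOne
    by_cases hOU : (O ∩ U).Nonempty
    · obtain ⟨x, hxO, hxU⟩ := hOU
      have hopen : IsOpen ((Subtype.val : U → X) ⁻¹' O) :=
        hO.preimage continuous_subtype_val
      have hneO : ((Subtype.val : U → X) ⁻¹' O).Nonempty := ⟨⟨x, hxU⟩, hxO⟩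
      obtain ⟨y, hyO, hyD⟩ := (dense_iff_inter_open.mp (hD n)) _ hopen hneO
      exact ⟨(y : X), hyO, Or.inl ⟨y, hyD, rfl⟩⟩
    · obtain ⟨x, hx⟩ := hOne
      refine ⟨x, hx, Or.inr ?_⟩
      intro hxU
      exact hOU ⟨x, hx, hxU⟩
  obtain ⟨F, hFsub, hFhit⟩ := h D' hD'dense
  refine ⟨fun n => (F n).preimage Subtype.val (Subtype.val_injective.injOn), ?_, ?_⟩
  · intro n x hx
    simp only [Finset.coe_preimage, Set.mem_preimage] at hx
    have := hFsub n hx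
    rcases this with ⟨y, hyD, hyx⟩ | hxc
    · rwa [Subtype.val_injective hyx] at hyD
    · exact absurd x.2 hxc
  · intro k V hVopen hVne
    choose W hWopen hWeq using fun i => isOpen_induced_iff.mp (hVopen i)
    set W' : Fin k → Set X := fun i => W i ∩ U with hW'
    have hW'open : ∀ i, IsOpen (W' i) := fun i => (hWopen i).inter hU
    have hW'ne : ∀ i, (W' i).Nonempty := by
      intro i
      obtain ⟨x, hx⟩ := hVne i
      refine ⟨(x : X), ?_, x.2⟩
      rw [← hWeq i] at hx
      exact hx
    obtain ⟨n, hn⟩ := hFhit k W' hW'open hW'ne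
    refine ⟨n, fun i => ?_⟩
    obtain ⟨x, ⟨hxW, hxU⟩, hxF⟩ := hn i
    refine ⟨⟨x, hxU⟩, ?_, ?_⟩
    · rw [← hWeq i]; exact hxW
    · simp only [Finset.coe_preimage, Set.mem_preimage]
      exact hxF
end

section
/- If X is a topological space such that X × ω (with ω discrete) is S-separable, then X is S-separable. -/
theorem stmt14 (X : Type*) [TopologicalSpace X] (h : SSep (X × ℕ)) :
    SSep X := by
  classical
  intro D hD
  obtain ⟨F, hF, hmain⟩ := h (fun n => D n ×ˢ Set.univ)
    (fun n => (hD n).prod dense_univ)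
  refine ⟨fun n => (F n).image Prod.fst, ?_, ?_⟩
  · intro n x hx
    simp only [Finset.coe_image, Set.mem_image] at hx
    obtain ⟨p, hp, rfl⟩ := hx
    exact (hF n hp).1
  · intro k U hUo hUne
    obtain ⟨n, hn⟩ := hmain k (fun i => U i ×ˢ Set.univ)
      (fun i => (hUo i).prod isOpen_univ)
      (fun i => (hUne i).prod ⟨0, trivial⟩)
    refine ⟨n, fun i => ?_⟩
    obtain ⟨p, hp1, hp2⟩ := hn i
    exact ⟨p.1, hp1.1, Finset.mem_coe.2 (Finset.mem_image_of_mem _ hp2)⟩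
end

section
/- If X is an S-separable topological space, then Xⁿ is separable for every n ∈ ω; in particular, for every sequence ⟨D_k : k ∈ ω⟩ of dense subsets of X there exist finite F_k ⊆ D_k such that ⋃_k F_kⁿ is dense in Xⁿ. -/
theorem stmt16 (X : Type*) [TopologicalSpace X] (h : SSep X) :
    (∀ n : ℕ, TopologicalSpace.SeparableSpace (Fin n → X)) ∧
    ∀ (n : ℕ) (D : ℕ → Set X), (∀ k, Dense (D k)) →
      ∃ F : ℕ → Finset X, (∀ k, ↑(F k) ⊆ D k) ∧
        Dense (⋃ k, {g : Fin n → X | ∀ i, g i ∈ F k}) := by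
  have main : ∀ (n : ℕ) (D : ℕ → Set X), (∀ k, Dense (D k)) →
      ∃ F : ℕ → Finset X, (∀ k, ↑(F k) ⊆ D k) ∧
        Dense (⋃ k, {g : Fin n → X | ∀ i, g i ∈ F k}) := by
    intro n D hD
    obtain ⟨F, hF, hS⟩ := h D hD
    refine ⟨F, hF, ?_⟩
    rw [dense_iff_inter_open]
    rintro s hs ⟨f, hf⟩
    obtain ⟨I, u, hu, hsub⟩ := isOpen_pi_iff.mp hs f hf
    set V : Fin n → Set X := fun i => if i ∈ I then u i else Set.univ with hV
    have hVopen : ∀ i, IsOpen (V i) := by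
      intro i; by_cases hi : i ∈ I <;> simp only [hV, hi, if_true, if_false]
      · exact (hu i hi).1
      · exact isOpen_univ
    have hVne : ∀ i, (V i).Nonempty := by
      intro i; by_cases hi : i ∈ I
      · exact ⟨f i, by simp [hV, hi, (hu i hi).2]⟩
      · exact ⟨f i, by simp [hV, hi]⟩
    obtain ⟨m, hm⟩ := hS n V hVopen hVne
    choose g hg using hm
    refine ⟨g, hsub ?_, Set.mem_iUnion.mpr ⟨m, fun i => (hg i).2⟩⟩
    intro i hi
    rw [Finset.mem_coe] at hi
    have := (hg i).1
    simpa [hV, hi] using this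
  refine ⟨?_, main⟩
  intro n
  obtain ⟨F, -, hd⟩ := main n (fun _ => Set.univ) (fun _ => dense_univ)
  refine ⟨⟨_, Set.countable_iUnion (fun k => ?_), hd⟩⟩
  have : {g : Fin n → X | ∀ i, g i ∈ F k} = Set.pi Set.univ (fun _ => (F k : Set X)) := by
    ext g; simp [Set.mem_univ_pi]
  rw [this]
  exact (Set.Finite.pi (fun i => (F k).finite_toSet)).countable
end
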